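/- Let n ≥ 3 and let v : ℝ → ℝ be a positive twice-differentiable solution of v'' - ((n-2)^2/4) v + (n(n-2)/4) v^{(n+2)/(n-2)} = 0. Define u : ℝⁿ \ {0} → ℝ by u(x) = |x|^{(2-n)/2} v(-log|x|). Then u satisfies Δu + (n(n-2)/4) u^{(n+2)/(n-2)} = 0 on ℝⁿ \ {0}. -/

import Mathlib

/-- The Euclidean Laplacian as the sum of second directional derivatives
along the standard orthonormal basis. -/
noncomputable def eLaplacian {n : ℕ} (f : EuclideanSpace ℝ (Fin n) → ℝ)
    (x : EuclideanSpace ℝ (Fin n)) : ℝ :=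
  ∑ i : Fin n,
    fderiv ℝ (fun y => fderiv ℝ f y (EuclideanSpace.single i 1)) x
      (EuclideanSpace.single i 1)

/-!
Work in the variable `s = ‖x‖ ^ 2`, in which `u` is `F s = s ^ a * v (-(log s) / 2)` with
`a = (2 - n) / 4`, and a function of `‖x‖ ^ 2` has Laplacian `2 n F' + 4 s F''`. Differentiating
`s ^ a * w (c * log s)` only lowers the exponent by one and replaces `w` by `a w + c w'`, so
`Δu = ‖x‖ ^ (-(n + 2) / 2) (v'' - (n - 2) ^ 2 / 4 v)`: for this `a` the `v'` terms cancel. The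
critical exponent `(n + 2) / (n - 2)` makes `u ^ p` carry the same power of `‖x‖`, and the ODE
for `v` closes the equation.
-/

open Filter Topology

theorem hasDerivAt_rpow_mul_comp_log {a c s w' : ℝ} {w : ℝ → ℝ} (hs : 0 < s)
    (hw : HasDerivAt w w' (c * Real.log s)) :
    HasDerivAt (fun s => s ^ a * w (c * Real.log s))
      (s ^ (a - 1) * (a * w (c * Real.log s) + c * w')) s := by
  have hlog : HasDerivAt (fun s => c * Real.log s) (c * s⁻¹) s :=
    (Real.hasDerivAt_log hs.ne').const_mul c
  refine ((Real.hasDerivAt_rpow_const (Or.inl hs.ne')).mul (hw.comp s hlog)).congr_deriv ?_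
  rw [Real.rpow_sub_one hs.ne', Function.comp_apply]
  field_simp

theorem eLaplacian_comp_norm_sq {n : ℕ} {F F' : ℝ → ℝ} {F'' : ℝ}
    {x : EuclideanSpace ℝ (Fin n)} (hF : ∀ᶠ s in 𝓝 (‖x‖ ^ 2), HasDerivAt F (F' s) s)
    (hF' : HasDerivAt F' F'' (‖x‖ ^ 2)) :
    eLaplacian (fun y => F (‖y‖ ^ 2)) x = 2 * n * F' (‖x‖ ^ 2) + 4 * ‖x‖ ^ 2 * F'' := by
  have hfirst : ∀ i,
      (fun y => fderiv ℝ (fun y => F (‖y‖ ^ 2)) y (EuclideanSpace.single i 1))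
        =ᶠ[𝓝 x] fun y => 2 * F' (‖y‖ ^ 2) * y i := by
    intro i
    have hcont : Tendsto (fun y : EuclideanSpace ℝ (Fin n) => ‖y‖ ^ 2) (𝓝 x)
        (𝓝 (‖x‖ ^ 2)) := (continuous_norm.pow 2).tendsto x
    filter_upwards [hcont.eventually hF] with y hy
    have h : HasFDerivAt (fun y => F (‖y‖ ^ 2)) _ y :=
      hy.comp_hasFDerivAt y (hasStrictFDerivAt_norm_sq y).hasFDerivAt
    rw [h.fderiv]
    simp only [smul_apply, coe_innerSL_apply,
      EuclideanSpace.inner_single_right, Real.ringHom_apply, one_mul, nsmul_eq_mul, smul_eq_mul]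
    ring
  have hsecond : ∀ i, fderiv ℝ (fun y => fderiv ℝ (fun y => F (‖y‖ ^ 2)) y
      (EuclideanSpace.single i 1)) x (EuclideanSpace.single i 1)
      = 2 * F' (‖x‖ ^ 2) + 4 * F'' * x i ^ 2 := by
    intro i
    have h : HasFDerivAt (fun y => 2 * F' (‖y‖ ^ 2) * y i) _ x :=
      ((hF'.comp_hasFDerivAt x (hasStrictFDerivAt_norm_sq x).hasFDerivAt).const_mul 2).mul
        (EuclideanSpace.proj i : EuclideanSpace ℝ (Fin n) →L[ℝ] ℝ).hasFDerivAt
    rw [(hfirst i).fderiv_eq, h.fderiv]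
    simp only [Function.comp_apply, add_apply, smul_apply, PiLp.proj_apply, PiLp.single_eq_same,
      coe_innerSL_apply, EuclideanSpace.inner_single_right, Real.ringHom_apply, nsmul_eq_mul,
      smul_eq_mul]
    ring
  unfold eLaplacian
  simp only [hsecond, Finset.sum_add_distrib, ← Finset.mul_sum,
    ← EuclideanSpace.real_norm_sq_eq, Finset.sum_const, Finset.card_univ, Fintype.card_fin,
    nsmul_eq_mul]
  ring

theorem eLaplacian_fowler_transform {n : ℕ} {v v' v'' : ℝ → ℝ}
    (hv : ∀ t, HasDerivAt v (v' t) t) (hv' : ∀ t, HasDerivAt v' (v'' t) t)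
    {x : EuclideanSpace ℝ (Fin n)} (hx : x ≠ 0) :
    eLaplacian (fun y => ‖y‖ ^ (((2 : ℝ) - n) / 2) * v (-Real.log ‖y‖)) x
      = ‖x‖ ^ (-((n : ℝ) + 2) / 2)
        * (v'' (-Real.log ‖x‖) - ((n - 2 : ℝ) ^ 2 / 4) * v (-Real.log ‖x‖)) := by
  set a : ℝ := ((2 : ℝ) - n) / 4
  set c : ℝ := -1 / 2
  set g : ℝ → ℝ := fun t => a * v t + c * v' t
  have hg : ∀ t, HasDerivAt g (a * v' t + c * v'' t) t := fun t =>
    ((hv t).const_mul a).add ((hv' t).const_mul c)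
  have hrewrite : (fun y : EuclideanSpace ℝ (Fin n) =>
        ‖y‖ ^ (((2 : ℝ) - n) / 2) * v (-Real.log ‖y‖))
      = fun y => (‖y‖ ^ 2) ^ a * v (c * Real.log (‖y‖ ^ 2)) := by
    funext y
    rw [Real.log_pow, ← Real.rpow_natCast, ← Real.rpow_mul (norm_nonneg y)]
    congr 2 <;> push_cast <;> ring
  have hs : 0 < ‖x‖ ^ 2 := by positivity
  have hF : ∀ᶠ s in 𝓝 (‖x‖ ^ 2), HasDerivAt (fun s => s ^ a * v (c * Real.log s))
      (s ^ (a - 1) * g (c * Real.log s)) s := by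
    filter_upwards [Ioi_mem_nhds hs] with s hs'
    exact hasDerivAt_rpow_mul_comp_log hs' (hv _)
  rw [hrewrite, eLaplacian_comp_norm_sq hF (hasDerivAt_rpow_mul_comp_log hs (hg _))]
  have hlog : c * Real.log (‖x‖ ^ 2) = -Real.log ‖x‖ := by
    rw [Real.log_pow]; push_cast; ring
  have hpow : (‖x‖ ^ 2) ^ (a - 1) = ‖x‖ ^ (-((n : ℝ) + 2) / 2) := by
    rw [← Real.rpow_natCast, ← Real.rpow_mul (norm_nonneg x)]
    congr 1; push_cast; ring
  have hpow_succ : (‖x‖ ^ 2) ^ (a - 1 - 1) * ‖x‖ ^ 2 = (‖x‖ ^ 2) ^ (a - 1) := by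
    rw [Real.rpow_sub_one hs.ne' (a - 1)]; field_simp
  rw [hlog, ← hpow, ← hpow_succ]
  simp only [g, a, c]
  ring

theorem fowler_correspondence (n : ℕ) (hn : 3 ≤ n)
    (v v' v'' : ℝ → ℝ) (hpos : ∀ t, 0 < v t)
    (hv : ∀ t, HasDerivAt v (v' t) t)
    (hv' : ∀ t, HasDerivAt v' (v'' t) t)
    (hode : ∀ t, v'' t - ((n - 2 : ℝ)^2 / 4) * v t
        + ((n : ℝ) * ((n : ℝ) - 2) / 4) * (v t) ^ (((n : ℝ) + 2) / ((n : ℝ) - 2)) = 0)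
    (u : EuclideanSpace ℝ (Fin n) → ℝ)
    (hu : ∀ x, u x = ‖x‖ ^ (((2 : ℝ) - n) / 2) * v (-Real.log ‖x‖)) :
    ∀ x : EuclideanSpace ℝ (Fin n), x ≠ 0 →
      eLaplacian u x
        + ((n : ℝ) * ((n : ℝ) - 2) / 4) * u x ^ (((n : ℝ) + 2) / ((n : ℝ) - 2)) = 0 := by
  intro x hx
  have hn2 : (n : ℝ) - 2 ≠ 0 := by
    have : (3 : ℝ) ≤ n := by exact_mod_cast hn
    linarith
  set t := -Real.log ‖x‖
  have hupow : u x ^ (((n : ℝ) + 2) / ((n : ℝ) - 2))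
      = ‖x‖ ^ (-((n : ℝ) + 2) / 2) * v t ^ (((n : ℝ) + 2) / ((n : ℝ) - 2)) := by
    rw [hu, Real.mul_rpow (by positivity) (hpos t).le, ← Real.rpow_mul (norm_nonneg x)]
    congr 2
    field_simp
    ring
  rw [hupow, funext hu, eLaplacian_fowler_transform hv hv' hx]
  linear_combination ‖x‖ ^ (-((n : ℝ) + 2) / 2) * hode t
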